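/- arXiv:2306.07277 — 4 statements merged into one kernel-verified Lean document; each statement's English description precedes it below -/
import Mathlib

section
/- If Q ∈ GL(2,ℝ) satisfies Q·(f,g) ∈ C̃ for every (f,g) ∈ C̃, where C̃ = {(f,g) ∈ C(D)² : g > 0 pointwise}, then Q is upper triangular (Q₂₁ = 0) with Q₂₂ > 0 (and Q₁₁ ≠ 0 by invertibility). -/
def act {X : Type*} [TopologicalSpace X] (A : Matrix (Fin 2) (Fin 2) ℝ)
    (p : C(X, ℝ) × C(X, ℝ)) : C(X, ℝ) × C(X, ℝ) :=
  (A 0 0 • p.1 + A 0 1 • p.2, A 1 0 • p.1 + A 1 1 • p.2)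

theorem Ctilde_invariant_implies_upper_triangular (n : ℕ)
    (D : Set (EuclideanSpace ℝ (Fin n))) (hD : IsCompact D) [Nonempty D]
    (Q : GL (Fin 2) ℝ)
    (hQ : ∀ f g : C(D, ℝ), (∀ x : D, 0 < g x) →
      ∀ x : D, 0 < (act (Q : Matrix (Fin 2) (Fin 2) ℝ) (f, g)).2 x) :
    (Q : Matrix (Fin 2) (Fin 2) ℝ) 1 0 = 0 ∧
    0 < (Q : Matrix (Fin 2) (Fin 2) ℝ) 1 1 ∧
    (Q : Matrix (Fin 2) (Fin 2) ℝ) 0 0 ≠ 0 := by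
  set M : Matrix (Fin 2) (Fin 2) ℝ := (Q : Matrix (Fin 2) (Fin 2) ℝ) with hM
  obtain ⟨x0⟩ := ‹Nonempty D›
  have key : ∀ c : ℝ, 0 < M 1 0 * c + M 1 1 := by
    intro c
    have := hQ (ContinuousMap.const _ c) (ContinuousMap.const _ 1)
      (fun x => by simp) x0
    simpa [act] using this
  have h10 : M 1 0 = 0 := by
    by_contra h
    have := key ((-(M 1 1) - 1) / M 1 0)
    rw [mul_div_cancel₀ _ h] at this
    linarith
  have h11 : 0 < M 1 1 := by simpa [h10] using key 0
  refine ⟨h10, h11, ?_⟩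
  have hdet : IsUnit M.det := (Matrix.isUnit_iff_isUnit_det M).mp Q.isUnit
  rw [Matrix.det_fin_two, h10] at hdet
  intro h00
  simp [h00] at hdet
end

section
/- Let G be the group of 2×2 matrices of the form [[1,-1],[1,1]]·[[a,c],[0,b]]·[[1,1],[-1,1]] with a ≠ 0, b > 0. Then every A ∈ G can be written uniquely as A = B·C where B = λI with λ > 0 (a positive dilation) and C = [[p, q-1],[p-1, q]] with p + q ≠ 1. Explicitly λ = 2b, p = (a+b-c)/(2b), q = (a+b+c)/(2b). -/
theorem unique_dilation_H_decomposition (a b c : ℝ) (ha : a ≠ 0) (hb : 0 < b) :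
    (!![(1:ℝ), -1; 1, 1] * !![a, c; 0, b] * !![(1:ℝ), 1; -1, 1] =
        ((2 * b) • (1 : Matrix (Fin 2) (Fin 2) ℝ)) *
          !![(a + b - c) / (2 * b), (a + b + c) / (2 * b) - 1;
             (a + b - c) / (2 * b) - 1, (a + b + c) / (2 * b)] ∧
      (a + b - c) / (2 * b) + (a + b + c) / (2 * b) ≠ 1 ∧
      0 < 2 * b) ∧
    ∀ l p q : ℝ, 0 < l → p + q ≠ 1 →
      !![(1:ℝ), -1; 1, 1] * !![a, c; 0, b] * !![(1:ℝ), 1; -1, 1] =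
        (l • (1 : Matrix (Fin 2) (Fin 2) ℝ)) * !![p, q - 1; p - 1, q] →
      l = 2 * b ∧ p = (a + b - c) / (2 * b) ∧ q = (a + b + c) / (2 * b) := by
  have hb2 : (2 * b) ≠ 0 := by positivity
  refine ⟨⟨?_, ?_, by positivity⟩, ?_⟩
  · ext i j
    fin_cases i <;> fin_cases j <;>
      simp [Matrix.mul_apply, Fin.sum_univ_two, Matrix.one_apply] <;>
      field_simp <;> ring
  · rw [← add_div]
    intro h
    rw [div_eq_one_iff_eq hb2] at h
    apply ha; linarith
  · intro l p q hl hpq heq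
    have h00 := congrFun (congrFun heq 0) 0
    have h01 := congrFun (congrFun heq 0) 1
    have h10 := congrFun (congrFun heq 1) 0
    have h11 := congrFun (congrFun heq 1) 1
    simp [Matrix.mul_apply, Fin.sum_univ_two, Matrix.one_apply] at h00 h01 h10 h11
    have hl' : l = 2 * b := by nlinarith
    refine ⟨hl', ?_, ?_⟩ <;> subst hl' <;> field_simp <;> nlinarith
end

section
/- The group G of matrices leaving the conjecture space invariant is the internal semidirect product T ⋊ H: T is a normal subgroup of G, T ∩ H = {I}, and G = TH, where T = {λI : λ > 0} and H = {[[p,q-1],[p-1,q]] : p+q ≠ 1}. -/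
def Gset : Set (Matrix (Fin 2) (Fin 2) ℝ) :=
  {A | ∃ a b c : ℝ, a ≠ 0 ∧ 0 < b ∧
    A = !![(1:ℝ), -1; 1, 1] * !![a, c; 0, b] * !![(1:ℝ), 1; -1, 1]}

def Tset : Set (Matrix (Fin 2) (Fin 2) ℝ) :=
  {A | ∃ l : ℝ, 0 < l ∧ A = l • (1 : Matrix (Fin 2) (Fin 2) ℝ)}

def Hset : Set (Matrix (Fin 2) (Fin 2) ℝ) :=
  {A | ∃ p q : ℝ, p + q ≠ 1 ∧ A = !![p, q - 1; p - 1, q]}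

theorem G_is_internal_semidirect_product :
    (∀ g ∈ Gset, ∀ t ∈ Tset, g * t * g⁻¹ ∈ Tset) ∧
    (Tset ∩ Hset = {1}) ∧
    (Gset = {A | ∃ t ∈ Tset, ∃ h ∈ Hset, A = t * h}) := by
  refine ⟨?_, ?_, ?_⟩
  · rintro g ⟨a, b, c, ha, hb, rfl⟩ t ⟨l, hl, rfl⟩
    set g := !![(1:ℝ), -1; 1, 1] * !![a, c; 0, b] * !![(1:ℝ), 1; -1, 1] with hg
    have hdet : g.det ≠ 0 := by
      rw [hg]
      simp only [Matrix.det_mul, Matrix.det_fin_two_of]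
      intro h
      rcases mul_eq_zero.mp h with h1 | h2
      · rcases mul_eq_zero.mp h1 with h3 | h4
        · norm_num at h3
        · simp at h4
          rcases h4 with h | h
          · exact ha h
          · exact hb.ne' h
      · norm_num at h2
    refine ⟨l, hl, ?_⟩
    rw [mul_smul_comm, mul_one, Matrix.smul_mul, Matrix.mul_nonsing_inv g (isUnit_iff_ne_zero.mpr hdet)]
  · ext A
    constructor
    · rintro ⟨⟨l, hl, rfl⟩, ⟨p, q, hpq, hA⟩⟩
      have h00 := congrFun (congrFun hA 0) 0
      have h01 := congrFun (congrFun hA 0) 1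
      have h10 := congrFun (congrFun hA 1) 0
      simp [Matrix.one_apply] at h00 h01 h10
      have hq : q = 1 := by linarith
      have hp : p = 1 := by linarith
      have hl1 : l = 1 := by rw [h00, hp]
      simp [hl1]
    · rintro rfl
      refine ⟨⟨1, one_pos, (one_smul _ _).symm⟩, ⟨1, 1, by norm_num, ?_⟩⟩
      rw [Matrix.one_fin_two]; norm_num
  · ext A
    simp only [Gset, Set.mem_setOf_eq]
    constructor
    · rintro ⟨a, b, c, ha, hb, rfl⟩
      refine ⟨(2*b) • (1 : Matrix (Fin 2) (Fin 2) ℝ), ⟨2*b, by linarith, rfl⟩,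
        !![(a+b-c)/(2*b), (a+b+c)/(2*b) - 1; (a+b-c)/(2*b) - 1, (a+b+c)/(2*b)],
        ⟨(a+b-c)/(2*b), (a+b+c)/(2*b), ?_, rfl⟩, ?_⟩
      · intro h
        have : (a+b-c)/(2*b) + (a+b+c)/(2*b) = (a+b)/b := by field_simp; ring
        rw [this] at h
        have : a + b = b := by field_simp at h; linarith
        exact ha (by linarith)
      · ext i j
        fin_cases i <;> fin_cases j <;>
          simp [Matrix.mul_apply, Fin.sum_univ_two, Matrix.one_apply] <;>
          field_simp <;> ring
    · rintro ⟨t, ⟨l, hl, rfl⟩, h, ⟨p, q, hpq, rfl⟩, rfl⟩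
      refine ⟨l*(p+q-1)/2, l/2, l*(q-p)/2, ?_, by linarith, ?_⟩
      · have : p + q - 1 ≠ 0 := fun h => hpq (by linarith)
        positivity
      · ext i j
        fin_cases i <;> fin_cases j <;>
          simp [Matrix.mul_apply, Fin.sum_univ_two, Matrix.one_apply] <;>
          ring
end

section
/- If π denotes the prime counting function and for all real x ≥ 17 the bounds x/log x < π(x) < 1.26·x/log x hold, then for all integers x, y ≥ 17 one has π(x) + π(y) < π(x·y). -/
lemma log_lt_aux (t : ℝ) (ht : 17 ≤ t) : 2.52 * Real.log t < t := by
  have ht0 : (0:ℝ) < t := by linarith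
  set s : ℝ := t ^ ((4:ℝ)⁻¹) with hs
  have hs0 : 0 < s := Real.rpow_pos_of_pos ht0 _
  have hs4 : s ^ (4:ℕ) = t := by
    rw [hs, ← Real.rpow_natCast (t ^ ((4:ℝ)⁻¹)) 4, ← Real.rpow_mul ht0.le]
    norm_num
  have hlog : Real.log t = 4 * Real.log s := by
    rw [hs, Real.log_rpow ht0]; ring
  have h1 : Real.log s ≤ s - 1 := Real.log_le_sub_one_of_pos hs0
  have hs2 : 2 ≤ s := by
    by_contra hc
    push_neg at hc
    have : s ^ (4:ℕ) < 2 ^ (4:ℕ) := pow_lt_pow_left₀ hc hs0.le (by norm_num)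
    rw [hs4] at this; norm_num at this; linarith
  nlinarith [hs4, sq_nonneg (s - 2), sq_nonneg s, mul_pos hs0 hs0]

lemma two_le_log (t : ℝ) (ht : 17 ≤ t) : 2 ≤ Real.log t := by
  have h1 : Real.exp 2 ≤ 17 := by
    have := Real.exp_one_lt_d9
    have h2 : Real.exp 2 = Real.exp 1 * Real.exp 1 := by
      rw [← Real.exp_add]; norm_num
    nlinarith [Real.exp_pos 1]
  calc (2:ℝ) = Real.log (Real.exp 2) := (Real.log_exp 2).symm
    _ ≤ Real.log t := Real.log_le_log (Real.exp_pos 2) (le_trans h1 ht)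

set_option maxHeartbeats 1000000 in
theorem primeCounting_superadditive_of_RS
    (h : ∀ x : ℝ, 17 ≤ x →
      x / Real.log x < (Nat.primeCounting ⌊x⌋₊ : ℝ) ∧
      (Nat.primeCounting ⌊x⌋₊ : ℝ) < 1.26 * x / Real.log x) :
    ∀ x y : ℕ, 17 ≤ x → 17 ≤ y →
      Nat.primeCounting x + Nat.primeCounting y < Nat.primeCounting (x * y) := by
  intro x y hx hy
  have hX : (17:ℝ) ≤ (x:ℝ) := by exact_mod_cast hx
  have hY : (17:ℝ) ≤ (y:ℝ) := by exact_mod_cast hy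
  have hXY : (17:ℝ) ≤ (x:ℝ) * (y:ℝ) := by nlinarith
  have h1 := (h x hX).2
  have h2 := (h y hY).2
  have h3 := (h ((x:ℝ) * (y:ℝ)) hXY).1
  rw [Nat.floor_natCast] at h1 h2
  rw [show ((x:ℝ) * (y:ℝ)) = ((x*y : ℕ) : ℝ) by push_cast; ring, Nat.floor_natCast] at h3
  have hlogmul : Real.log ((x*y : ℕ) : ℝ) = Real.log x + Real.log y := by
    push_cast
    rw [Real.log_mul (by positivity) (by positivity)]
  set a := Real.log (x:ℝ) with ha
  set b := Real.log (y:ℝ) with hb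
  have ha2 : 2 ≤ a := two_le_log _ hX
  have hb2 : 2 ≤ b := two_le_log _ hY
  have haX : 2.52 * a < x := log_lt_aux _ hX
  have hbY : 2.52 * b < y := log_lt_aux _ hY
  rw [hlogmul] at h3
  have key : 1.26 * (x:ℝ) / a + 1.26 * (y:ℝ) / b ≤ (x:ℝ) * (y:ℝ) / (a + b) := by
    rw [div_add_div _ _ (by linarith) (by linarith), div_le_div_iff₀ (by positivity) (by linarith)]
    have hab : a + b ≤ a * b := by nlinarith [mul_nonneg (show (0:ℝ) ≤ a - 1 by linarith) (show (0:ℝ) ≤ b - 1 by linarith)]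
    have hS : 1.26 * (x:ℝ) * b + 1.26 * (y:ℝ) * a < (x:ℝ) * (y:ℝ) := by
      nlinarith [mul_lt_mul_of_pos_left hbY (show (0:ℝ) < (x:ℝ) by linarith),
        mul_lt_mul_of_pos_left haX (show (0:ℝ) < (y:ℝ) by linarith)]
    have hS0 : (0:ℝ) ≤ 1.26 * (x:ℝ) * b + 1.26 * (y:ℝ) * a := by nlinarith
    nlinarith [mul_pos (show (0:ℝ) < (x:ℝ)*(y:ℝ) - (1.26 * (x:ℝ) * b + 1.26 * (y:ℝ) * a) by linarith) (show (0:ℝ) < a*b by nlinarith),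
      mul_nonneg hS0 (show (0:ℝ) ≤ a*b - (a+b) by linarith)]
  have : (Nat.primeCounting x : ℝ) + Nat.primeCounting y < Nat.primeCounting (x*y) := by
    calc (Nat.primeCounting x : ℝ) + Nat.primeCounting y
        < 1.26 * x / a + 1.26 * y / b := by linarith
      _ ≤ (x:ℝ) * y / (a + b) := key
      _ < Nat.primeCounting (x*y) := by push_cast at h3 ⊢; linarith
  exact_mod_cast this
end
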